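/- Let s ∈ S⁺ and u = (u_1,…,u_p) ∈ AP(s) with p > 2 blocks. Then the number of admissible shuffles satisfies the recurrence a(u) = Σ_{k=1}^{p−1} a(u_1,…,u_k∪u_p,…,u_{p−1}), where (u_1,…,u_k∪u_p,…,u_{p−1}) is the partition obtained from u by merging the last block u_p into u_k, and a(v) = 0 whenever the partition v is not admissible; moreover a(u) = 1 when u is an admissible partition with exactly two blocks. -/

import Mathlib

/-- The two-letter alphabet `{z, w}`. -/
inductive Letter | z | w
deriving DecidableEq

/-- Words: elements of the free monoid `S = FS({z,w})`. -/
abbrev Word := List Letter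

/-- The letter of `s` at position `j` (defaulting to `z`). -/
def letterAt (s : Word) (j : ℕ) : Letter := s.getD j Letter.z

/-- `P` is a partition of the finite set of positions `g ⊆ ℕ` into nonempty blocks. -/
def IsPartitionOn (g : Finset ℕ) (P : Finset (Finset ℕ)) : Prop :=
  (∀ b ∈ P, b.Nonempty) ∧ (P : Set (Finset ℕ)).PairwiseDisjoint id ∧ P.sup id = g

/-- The position `j` is inner with respect to the block `b`:
`j ∉ b` and `min b < j < max b`. -/
def InnerPos (j : ℕ) (b : Finset ℕ) : Prop :=
  j ∉ b ∧ ∃ i ∈ b, ∃ k ∈ b, i < j ∧ j < k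

/-- A partition is admissible if no block contains a letter `w` that is inner
with respect to another block. -/
def Admissible (s : Word) (P : Finset (Finset ℕ)) : Prop :=
  ∀ b ∈ P, ∀ b' ∈ P, b ≠ b' → ∀ j ∈ b, letterAt s j = Letter.w → ¬ InnerPos j b'

open scoped Classical in
/-- The set `AP(s)` of admissible partitions of the positions `g` of the word `s`. -/
noncomputable def APfin (s : Word) (g : Finset ℕ) : Finset (Finset (Finset ℕ)) :=
  g.powerset.powerset.filter fun P => IsPartitionOn g P ∧ Admissible s P

/-- The subword of `s` determined by a set of positions `b`. -/
def wordOf (s : Word) (b : Finset ℕ) : Word :=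
  (b.sort (· ≤ ·)).map (letterAt s)

/-- `L` is the family of admissible cumulants of the moment function `M`:
`M(s) = Σ_{u ∈ AP(s)} L(u₁)⋯L(u_p)` for every nonempty word `s`. -/
def IsCumulants (M L : Word → ℂ) : Prop :=
  ∀ s : Word, s ≠ [] →
    M s = ∑ P ∈ APfin s (Finset.range s.length), ∏ b ∈ P, L (wordOf s b)

/-- `P` refines `Q`: every block of `P` is contained in a block of `Q`. -/
def Refines (P Q : Finset (Finset ℕ)) : Prop := ∀ b ∈ P, ∃ c ∈ Q, b ⊆ c

open scoped Classical in
/-- `m` is the Möbius function of the lattice `AP(s)` of admissible partitions of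
the position set `g` of `s`: `m(u|u) = 1` and `m(u|v) = −Σ_{u ≤ t < v} m(u|t)`. -/
noncomputable def IsMobius (s : Word) (g : Finset ℕ)
    (m : Finset (Finset ℕ) → Finset (Finset ℕ) → ℂ) : Prop :=
  (∀ u ∈ APfin s g, m u u = 1) ∧
    ∀ u ∈ APfin s g, ∀ v ∈ APfin s g, Refines u v → u ≠ v →
      m u v = -∑ t ∈ (APfin s g).filter fun t => Refines u t ∧ Refines t v ∧ t ≠ v, m u t

/-- `c` is the last block of `P`: the block with the largest least element. -/
def IsLastBlock (P : Finset (Finset ℕ)) (c : Finset ℕ) : Prop :=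
  c ∈ P ∧ ∀ b ∈ P, b ≠ c → ∃ i ∈ b, ∀ j ∈ c, i < j

/-- One transition of a shuffle: merge the last block of `P` into one of the other
blocks. -/
def MergeStep (P Q : Finset (Finset ℕ)) : Prop :=
  ∃ c, IsLastBlock P c ∧ ∃ b ∈ P, b ≠ c ∧ Q = insert (b ∪ c) ((P.erase b).erase c)

/-- `a(u)`: the number of admissible shuffles of `u`, i.e. of sequences
`u = u⁰ → u¹ → ⋯ → 1_s` of admissible partitions of `s`, each obtained from the
previous one by merging its last block into another block (`a(u) = 0` if `u` is
not an admissible partition of `s`). -/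
noncomputable def shuffleCount (s : Word) (u : Finset (Finset ℕ)) : ℕ :=
  Set.ncard {Lst : List (Finset (Finset ℕ)) |
    Lst.head? = some u ∧ Lst.getLast? = some {Finset.range s.length} ∧
    (∀ P ∈ Lst, P ∈ APfin s (Finset.range s.length)) ∧
    Lst.Chain' MergeStep}

/-!
A shuffle of `u` is `u` followed by a shuffle of the partition obtained by merging the last
block `c` of `u` into some other block `b`. Distinct `b` give distinct merged partitions
(the blocks are disjoint and nonempty), so the shuffles of `u` split into disjoint families
indexed by `b`; they are finite because block counts strictly decrease along a shuffle, so a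
shuffle lists distinct admissible partitions. A two-block partition merges only into `1_s`,
whose one shuffle is the trivial one, which gives `a(v) = 1`.
-/

open Finset

def shuffles (s : Word) (u : Finset (Finset ℕ)) : Set (List (Finset (Finset ℕ))) :=
  {Lst : List (Finset (Finset ℕ)) |
    Lst.head? = some u ∧ Lst.getLast? = some {Finset.range s.length} ∧
    (∀ P ∈ Lst, P ∈ APfin s (Finset.range s.length)) ∧
    Lst.IsChain MergeStep}

lemma shuffleCount_eq_ncard (s : Word) (u : Finset (Finset ℕ)) :
    shuffleCount s u = (shuffles s u).ncard := rfl

lemma mem_APfin_iff {s : Word} {g : Finset ℕ} {P : Finset (Finset ℕ)} :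
    P ∈ APfin s g ↔ IsPartitionOn g P ∧ Admissible s P := by
  classical
  simp only [APfin, mem_filter, mem_powerset, and_iff_right_iff_imp]
  rintro ⟨⟨-, -, hsup⟩, -⟩ b hb
  rw [mem_powerset, ← hsup]
  exact le_sup (f := id) hb

lemma IsPartitionOn.disjoint {g : Finset ℕ} {P : Finset (Finset ℕ)} (hP : IsPartitionOn g P)
    {b c : Finset ℕ} (hb : b ∈ P) (hc : c ∈ P) (hbc : b ≠ c) : Disjoint b c :=
  hP.2.1 hb hc hbc

lemma singleton_mem_APfin {s : Word} {g : Finset ℕ} (hg : g.Nonempty) : {g} ∈ APfin s g := by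
  refine mem_APfin_iff.2 ⟨⟨by simpa using hg, by simp, by simp⟩, ?_⟩
  intro b hb b' hb' hne
  rw [mem_singleton] at hb hb'
  exact absurd (hb.trans hb'.symm) hne

lemma IsLastBlock.unique {P : Finset (Finset ℕ)} {c c' : Finset ℕ}
    (h : IsLastBlock P c) (h' : IsLastBlock P c') : c = c' := by
  by_contra hne
  obtain ⟨i, hi, hic'⟩ := h.2 c' h'.1 (Ne.symm hne)
  obtain ⟨i', hi', hi'c⟩ := h'.2 c h.1 hne
  exact lt_asymm (hic' i' hi') (hi'c i hi)

lemma exists_isLastBlock {g : Finset ℕ} {P : Finset (Finset ℕ)} (hP : IsPartitionOn g P)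
    (hne : P.Nonempty) : ∃ c, IsLastBlock P c := by
  obtain ⟨c, hcP, hmax⟩ := P.exists_max_image Finset.min hne
  refine ⟨c, hcP, fun b hb hbc => ?_⟩
  obtain ⟨i, hi⟩ := Finset.min_of_nonempty (hP.1 b hb)
  have hic : (i : WithTop ℕ) < c.min := by
    refine lt_of_le_of_ne (hi ▸ hmax b hb :) fun h => ?_
    exact disjoint_left.1 (hP.disjoint hb hcP hbc) (mem_of_min hi) (mem_of_min h.symm)
  exact ⟨i, mem_of_min hi, fun j hj => WithTop.coe_lt_coe.1 (hic.trans_le (min_le hj))⟩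

lemma not_mergeStep_singleton (g : Finset ℕ) (Q : Finset (Finset ℕ)) : ¬ MergeStep {g} Q := by
  rintro ⟨c, ⟨hc, -⟩, b, hb, hbc, -⟩
  rw [mem_singleton] at hc hb
  exact hbc (hb.trans hc.symm)

lemma MergeStep.card_lt {P Q : Finset (Finset ℕ)} (h : MergeStep P Q) : Q.card < P.card := by
  obtain ⟨c, ⟨hcP, -⟩, b, hbP, hbc, rfl⟩ := h
  calc _ ≤ ((P.erase b).erase c).card + 1 := card_insert_le _ _
    _ = (P.erase b).card := card_erase_add_one (mem_erase.2 ⟨Ne.symm hbc, hcP⟩)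
    _ < P.card := card_erase_lt_of_mem hbP

lemma nodup_of_isChain_mergeStep {L : List (Finset (Finset ℕ))} (h : L.IsChain MergeStep) :
    L.Nodup := by
  have hcard : (L.map Finset.card).IsChain (· > ·) :=
    List.isChain_map _ |>.2 <| h.imp fun _ _ => MergeStep.card_lt
  exact List.Nodup.of_map Finset.card ((List.isChain_iff_pairwise.1 hcard).imp ne_of_gt)

lemma shuffles_finite (s : Word) (u : Finset (Finset ℕ)) : (shuffles s u).Finite := by
  set T := APfin s (range s.length)
  refine ((List.finite_length_le T T.card).image (List.map Subtype.val)).subset ?_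
  rintro L ⟨-, -, hmem, hchain⟩
  have hlen : L.length ≤ T.card := by
    rw [← List.toFinset_card_of_nodup (nodup_of_isChain_mergeStep hchain)]
    exact card_le_card fun P hP => hmem P (List.mem_toFinset.1 hP)
  lift L to List T using hmem
  exact ⟨L, by simpa using hlen, rfl⟩

section Shuffles

variable {s : Word}

lemma exists_eq_cons_of_mem_shuffles {u : Finset (Finset ℕ)} {L : List (Finset (Finset ℕ))}
    (h : L ∈ shuffles s u) : ∃ L', L = u :: L' :=
  List.head?_eq_some_iff.1 h.1

lemma cons_cons_mem_shuffles_iff {P Q : Finset (Finset ℕ)} {L : List (Finset (Finset ℕ))} :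
    P :: Q :: L ∈ shuffles s P ↔
      P ∈ APfin s (range s.length) ∧ MergeStep P Q ∧ Q :: L ∈ shuffles s Q := by
  simp only [shuffles, Set.mem_ofPred_eq, List.head?_cons, List.getLast?_cons_cons,
    List.forall_mem_cons, List.isChain_cons_cons]
  tauto

lemma shuffles_singleton (hs : s ≠ []) :
    shuffles s {range s.length} = {[{range s.length}]} := by
  ext L
  constructor
  · intro hL
    obtain ⟨_ | ⟨Q, L'⟩, rfl⟩ := exists_eq_cons_of_mem_shuffles hL
    · rfl
    · exact absurd (cons_cons_mem_shuffles_iff.1 hL).2.1 (not_mergeStep_singleton _ _)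
  · rintro rfl
    have hg : (range s.length).Nonempty := nonempty_range_iff.2 (by simpa using hs)
    exact ⟨rfl, rfl, by simpa using singleton_mem_APfin hg, List.isChain_singleton _⟩

lemma shuffleCount_singleton (hs : s ≠ []) : shuffleCount s {range s.length} = 1 := by
  rw [shuffleCount_eq_ncard, shuffles_singleton hs, Set.ncard_singleton]

lemma shuffles_disjoint {P Q : Finset (Finset ℕ)} (h : P ≠ Q) :
    Disjoint (shuffles s P) (shuffles s Q) :=
  Set.disjoint_left.2 fun _ hP hQ => h (Option.some.inj (hP.1.symm.trans hQ.1))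

lemma shuffles_eq_image_cons {u : Finset (Finset ℕ)} (hu : u ∈ APfin s (range s.length))
    (hcard : 1 < u.card) {c : Finset ℕ} (hc : IsLastBlock u c) :
    shuffles s u = List.cons u ''
      ⋃ b ∈ u.erase c, shuffles s (insert (b ∪ c) ((u.erase b).erase c)) := by
  ext L
  simp only [Set.mem_image, Set.mem_iUnion, exists_prop]
  constructor
  · intro hL
    obtain ⟨_ | ⟨Q, L'⟩, rfl⟩ := exists_eq_cons_of_mem_shuffles hL
    · have : u = {range s.length} := by simpa using hL.2.1
      simp [this] at hcard
    · obtain ⟨-, ⟨c', hc', b, hb, hbc, rfl⟩, hL'⟩ := cons_cons_mem_shuffles_iff.1 hL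
      obtain rfl := hc'.unique hc
      exact ⟨_, ⟨b, mem_erase.2 ⟨hbc, hb⟩, hL'⟩, rfl⟩
  · rintro ⟨L, ⟨b, hb, hL⟩, rfl⟩
    obtain ⟨L', rfl⟩ := exists_eq_cons_of_mem_shuffles hL
    exact cons_cons_mem_shuffles_iff.2
      ⟨hu, ⟨c, hc, b, mem_of_mem_erase hb, ne_of_mem_erase hb, rfl⟩, hL⟩

end Shuffles

lemma merge_injOn {g : Finset ℕ} {u : Finset (Finset ℕ)} (hu : IsPartitionOn g u)
    {c : Finset ℕ} (hc : c ∈ u) :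
    Set.InjOn (fun b => insert (b ∪ c) ((u.erase b).erase c)) (u.erase c) := by
  intro b hb b' hb' (h : insert (b ∪ c) _ = insert (b' ∪ c) _)
  have hbc : b ∪ c ∈ insert (b' ∪ c) ((u.erase b').erase c) := h ▸ mem_insert_self _ _
  rcases mem_insert.1 hbc with heq | hmem
  · rw [← union_sdiff_cancel_right (hu.disjoint (mem_of_mem_erase hb) hc (ne_of_mem_erase hb)),
      ← union_sdiff_cancel_right (hu.disjoint (mem_of_mem_erase hb') hc (ne_of_mem_erase hb')), heq]
  · obtain ⟨hne, hmem⟩ := mem_erase.1 hmem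
    obtain ⟨x, hx⟩ := hu.1 c hc
    exact absurd (hu.disjoint hc (mem_of_mem_erase hmem) (Ne.symm hne))
      (not_disjoint_iff.2 ⟨x, hx, mem_union_right b hx⟩)

lemma merge_eq_singleton_of_card_eq_two {g : Finset ℕ} {v : Finset (Finset ℕ)}
    (hv : IsPartitionOn g v) (h2 : v.card = 2) {b c : Finset ℕ} (hb : b ∈ v) (hc : c ∈ v)
    (hbc : b ≠ c) : insert (b ∪ c) ((v.erase b).erase c) = {g} := by
  obtain rfl : v = {b, c} := (eq_of_subset_of_card_le
    (insert_subset hb (singleton_subset_iff.2 hc)) (by rw [h2, card_pair hbc])).symm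
  have hg : b ∪ c = g := by simpa using hv.2.2
  rw [erase_insert (by simpa using hbc), erase_singleton, insert_empty, hg]

lemma shuffleCount_eq_sum {s : Word} {u : Finset (Finset ℕ)}
    (hu : u ∈ APfin s (range s.length)) (hcard : 1 < u.card) {c : Finset ℕ}
    (hc : IsLastBlock u c) :
    shuffleCount s u =
      ∑ b ∈ u.erase c, shuffleCount s (insert (b ∪ c) ((u.erase b).erase c)) := by
  have hdisj : (u.erase c : Set (Finset ℕ)).PairwiseDisjoint
      fun b => shuffles s (insert (b ∪ c) ((u.erase b).erase c)) :=
    fun b hb b' hb' hne =>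
      shuffles_disjoint fun h => hne (merge_injOn (mem_APfin_iff.1 hu).1 hc.1 hb hb' h)
  rw [shuffleCount_eq_ncard, shuffles_eq_image_cons hu hcard hc,
    Set.ncard_image_of_injective _ List.cons_injective, ← set_biUnion_coe,
    (u.erase c).finite_toSet.ncard_biUnion (fun _ _ => shuffles_finite _ _) hdisj,
    finsum_mem_coe_finset]
  rfl

/-- recurrence for the number of admissible shuffles: if `u` has more
than two blocks and `c` is its last block, then `a(u) = Σ_{b ≠ c} a(u with c merged
into b)`; moreover `a(u) = 1` for admissible partitions with exactly two blocks. -/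
theorem shuffleCount_recurrence (s : Word) (hs : s ≠ [])
    (u : Finset (Finset ℕ)) (hu : u ∈ APfin s (Finset.range s.length))
    (hcard : 2 < u.card) (c : Finset ℕ) (hc : IsLastBlock u c) :
    (shuffleCount s u =
        ∑ b ∈ u.erase c, shuffleCount s (insert (b ∪ c) ((u.erase b).erase c))) ∧
      ∀ v ∈ APfin s (Finset.range s.length), v.card = 2 → shuffleCount s v = 1 := by
  refine ⟨shuffleCount_eq_sum hu (by omega) hc, fun v hv h2 => ?_⟩
  have hvP := (mem_APfin_iff.1 hv).1
  obtain ⟨c, hc⟩ := exists_isLastBlock hvP (card_pos.1 (by omega))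
  obtain ⟨b, hb⟩ := card_eq_one.1 (by rw [card_erase_of_mem hc.1, h2] : (v.erase c).card = 1)
  have hbv : b ∈ v.erase c := hb ▸ mem_singleton_self b
  rw [shuffleCount_eq_sum hv (by omega) hc, hb, sum_singleton,
    merge_eq_singleton_of_card_eq_two hvP h2 (mem_of_mem_erase hbv) hc.1 (ne_of_mem_erase hbv),
    shuffleCount_singleton hs]
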